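/- Let n ≥ k ≥ 2, let 𝔽 be a field, let S_k ⊆ C([n],k), and let V be a (k−1)-subset of [n] that is not a facet of ⟨S_k⟩. Then V is simplicial in ⟨S_k⟩ if and only if the set X = ∪_{F ∈ supp(δ^{k−1}V)} F is the unique facet of ⟨S_k⟩ containing V. -/

import Mathlib

/-!
Common definitions for simplicial matroids, following Cordovil–Lemos–Linhares Sales,
"Dirac's theorem on simplicial matroids".

We model `[n] = {1,…,n}` by `Fin n`, and a subset of `[n]` by a `Finset (Fin n)`.
A family `S_k ⊆ C([n],k)` is a `Finset (Finset (Fin n))` (all of whose members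
have cardinality `k`, which is imposed by hypotheses in the theorems).
-/

open Finset

/-- The incidence number `[F' : F]`: if `F = i₁ < i₂ < ⋯ < iₘ` and `F' = F \ {iⱼ}`
then `[F' : F] = (-1)ʲ` (with `j` the 1-based position of the deleted element),
and `[F' : F] = 0` otherwise. -/
def inc {n : ℕ} (F' F : Finset (Fin n)) : ℤ :=
  ∑ i ∈ F, if F' = F.erase i then (-1 : ℤ) ^ (F.filter (fun j => j ≤ i)).card else 0

/-- The family `C([n], m)` of `m`-element subsets of `[n]`, as a type. -/
abbrev Csets (n m : ℕ) := {F : Finset (Fin n) // F.card = m}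

/-- `∂_k F`, the boundary of a single `k`-subset `F` of `[n]`,
as a vector of `𝔽^{C([n],k-1)}`. -/
def bvec (𝔽 : Type*) [Field 𝔽] (n k : ℕ) (F : Finset (Fin n)) : Csets n (k - 1) → 𝔽 :=
  fun F' => ((inc F'.1 F : ℤ) : 𝔽)

/-- Independence in the simplicial matroid `Sim_k^n(S_k)` over `𝔽`:
`X ⊆ S_k` is independent iff the vectors `∂_k F`, `F ∈ X`, are linearly independent. -/
def SimIndep (𝔽 : Type*) [Field 𝔽] (n k : ℕ) (Sk X : Finset (Finset (Fin n))) : Prop :=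
  X ⊆ Sk ∧ LinearIndependent 𝔽 (fun F : X => bvec 𝔽 n k F.1)

/-- A circuit of `Sim_k^n(S_k)`: a minimal dependent subset of the ground set. -/
def SimCircuit (𝔽 : Type*) [Field 𝔽] (n k : ℕ) (Sk C : Finset (Finset (Fin n))) : Prop :=
  C ⊆ Sk ∧ ¬ LinearIndependent 𝔽 (fun F : C => bvec 𝔽 n k F.1) ∧
    ∀ C' ⊂ C, LinearIndependent 𝔽 (fun F : C' => bvec 𝔽 n k F.1)

/-- The rank (in `Sim_k^n`) of a set `X` of `k`-subsets of `[n]`: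
the dimension of the span of the boundaries of its members. -/
noncomputable def simRank (𝔽 : Type*) [Field 𝔽] (n k : ℕ) (X : Finset (Finset (Fin n))) : ℕ :=
  Module.finrank 𝔽 (Submodule.span 𝔽 ((fun F => bvec 𝔽 n k F) '' (X : Set (Finset (Fin n)))))

/-- A cocircuit of `Sim_k^n(S_k)`, i.e. a circuit of the dual matroid:
a minimal set `C ⊆ S_k` whose complement does not span (`X` is independent in the dual
matroid iff `r(E ∖ X) = r(E)`). -/
def SimCocircuit (𝔽 : Type*) [Field 𝔽] (n k : ℕ) (Sk C : Finset (Finset (Fin n))) : Prop :=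
  C ⊆ Sk ∧ simRank 𝔽 n k (Sk \ C) < simRank 𝔽 n k Sk ∧
    ∀ C' ⊂ C, simRank 𝔽 n k (Sk \ C') = simRank 𝔽 n k Sk

/-- The boundary map `∂_k : 𝔽^{S_k} → 𝔽^{C([n],k-1)}`. -/
noncomputable def bdryMap (𝔽 : Type*) [Field 𝔽] (n k : ℕ) (Sk : Finset (Finset (Fin n))) :
    (↥Sk → 𝔽) →ₗ[𝔽] (Csets n (k - 1) → 𝔽) :=
  Matrix.mulVecLin (Matrix.of fun (F' : Csets n (k - 1)) (F : ↥Sk) => ((inc F'.1 F.1 : ℤ) : 𝔽))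

/-- The coboundary `δ^{k-1} V` of a `(k-1)`-subset `V` of `[n]`,
as a vector of `𝔽^{S_k}`; its `F`-coordinate is `[V : F]`. -/
def cobdry (𝔽 : Type*) [Field 𝔽] {n : ℕ} (Sk : Finset (Finset (Fin n)))
    (V : Finset (Fin n)) : ↥Sk → 𝔽 :=
  fun F => ((inc V F.1 : ℤ) : 𝔽)

/-- The boundary `∂_{k+1} X` of a `(k+1)`-subset `X` of `[n]`, regarded as a vector
of `𝔽^{S_k}`; its `F`-coordinate is `[F : X]`. -/
def pbdry (𝔽 : Type*) [Field 𝔽] {n : ℕ} (Sk : Finset (Finset (Fin n)))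
    (X : Finset (Fin n)) : ↥Sk → 𝔽 :=
  fun F => ((inc F.1 X : ℤ) : 𝔽)

open scoped Classical in
/-- The support of a vector of `𝔽^{S_k}`, as a set of `k`-subsets of `[n]`. -/
noncomputable def suppFin {𝔽 : Type*} [Field 𝔽] {n : ℕ} {Sk : Finset (Finset (Fin n))}
    (v : ↥Sk → 𝔽) : Finset (Finset (Fin n)) :=
  (Sk.attach.filter fun F => v F ≠ 0).image Subtype.val

/-- `supp(δ^{k-1} V) ⊆ S_k`. -/
noncomputable def suppδ (𝔽 : Type*) [Field 𝔽] {n : ℕ} (Sk : Finset (Finset (Fin n)))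
    (V : Finset (Fin n)) : Finset (Finset (Fin n)) :=
  suppFin (cobdry 𝔽 Sk V)

/-- The cocircuit space of `Sim_k^n(S_k)`: the orthogonal complement, with respect to the
standard bilinear form on `𝔽^{S_k}`, of the circuit space `ker ∂_k`. -/
noncomputable def cocircSpace (𝔽 : Type*) [Field 𝔽] (n k : ℕ) (Sk : Finset (Finset (Fin n))) :
    Submodule 𝔽 (↥Sk → 𝔽) where
  carrier := {w | ∀ v ∈ LinearMap.ker (bdryMap 𝔽 n k Sk), ∑ F, v F * w F = 0}
  zero_mem' := by intro v hv; simp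
  add_mem' := by
    intro a b ha hb v hv
    have h1 := ha v hv
    have h2 := hb v hv
    simp only [Pi.add_apply, mul_add, Finset.sum_add_distrib]
    rw [h1, h2, add_zero]
  smul_mem' := by
    intro c w hw v hv
    have h := hw v hv
    simp only [Pi.smul_apply, smul_eq_mul]
    calc ∑ F, v F * (c * w F) = ∑ F, c * (v F * w F) := by
          exact Finset.sum_congr rfl fun F _ => by ring
      _ = c * ∑ F, v F * w F := (Finset.mul_sum _ _ _).symm
      _ = 0 := by rw [h, mul_zero]

/-- The faces of the `k`-hyperclique complex `⟨S_k⟩`: all `F ⊆ [n]` with `|F| < k`,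
together with all `F` every `k`-element subset of which lies in `S_k`. -/
def IsFace {n : ℕ} (k : ℕ) (Sk : Finset (Finset (Fin n))) (F : Finset (Fin n)) : Prop :=
  F.card < k ∨ ∀ G ⊆ F, G.card = k → G ∈ Sk

/-- A facet of `⟨S_k⟩`: an inclusion-maximal face. -/
def IsFacet {n : ℕ} (k : ℕ) (Sk : Finset (Finset (Fin n))) (F : Finset (Fin n)) : Prop :=
  IsFace k Sk F ∧ ∀ G, IsFace k Sk G → F ⊆ G → F = G

/-- `V` is simplicial in `⟨S_k⟩` if there is exactly one facet `X` of `⟨S_k⟩`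
with `V ⊊ X`. -/
def SimplicialFace {n : ℕ} (k : ℕ) (Sk : Finset (Finset (Fin n))) (V : Finset (Fin n)) : Prop :=
  ∃! X, IsFacet k Sk X ∧ V ⊂ X

/-- The `k`-skeleta of the complexes `Δ_0 = ⟨S_k⟩`, `Δ_{j+1} = Δ_j ∖∖ V_j`, where
`Δ ∖∖ V = ⟨(skeleton of Δ) ∖ supp(δ^{k-1} V)⟩` (0-indexed). -/
noncomputable def delSeq (𝔽 : Type*) [Field 𝔽] {n : ℕ} (Sk : Finset (Finset (Fin n)))
    (V : ℕ → Finset (Fin n)) : ℕ → Finset (Finset (Fin n))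
  | 0 => Sk
  | j + 1 => delSeq 𝔽 Sk V j \ suppδ 𝔽 (delSeq 𝔽 Sk V j) (V j)

/-- `C*_j := supp(δ^{k-1} V_j) ∖ ⋃_{i<j} supp(δ^{k-1} V_i)` (0-indexed). -/
noncomputable def Cstar (𝔽 : Type*) [Field 𝔽] {n : ℕ} (Sk : Finset (Finset (Fin n)))
    (V : ℕ → Finset (Fin n)) (j : ℕ) : Finset (Finset (Fin n)) :=
  suppδ 𝔽 Sk (V j) \ (Finset.range j).biUnion (fun i => suppδ 𝔽 Sk (V i))

/-- `(V_1,…,V_r)` (0-indexed: `V 0, …, V (r-1)`) is a basic linear sequence for `⟨S_k⟩`,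
where `r` is the rank of `Sim_k^n(S_k)`: each `V_j` is a `(k-1)`-subset of `[n]` and each
`C*_j` is a cocircuit of `Sim_k^n(S_k(Δ_{j-1}))`. -/
def BasicLinearSeq (𝔽 : Type*) [Field 𝔽] (n k : ℕ) (Sk : Finset (Finset (Fin n))) (r : ℕ)
    (V : ℕ → Finset (Fin n)) : Prop :=
  simRank 𝔽 n k Sk = r ∧ (∀ j < r, (V j).card = k - 1) ∧
    ∀ j < r, SimCocircuit 𝔽 n k (delSeq 𝔽 Sk V j) (Cstar 𝔽 Sk V j)

/-- `⟨S_k⟩` is D-perfect: there is a basic linear sequence `V_1,…,V_r` such that each `V_j`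
is simplicial in `Δ_{j-1}`. -/
def DPerfect (𝔽 : Type*) [Field 𝔽] (n k : ℕ) (Sk : Finset (Finset (Fin n))) : Prop :=
  ∃ V : ℕ → Finset (Fin n),
    BasicLinearSeq 𝔽 n k Sk (simRank 𝔽 n k Sk) V ∧
      ∀ j < simRank 𝔽 n k Sk, SimplicialFace k (delSeq 𝔽 Sk V j) (V j)

/-- A flat of `Sim_k^n(S_k)`: a closed subset of the ground set. -/
def SimFlat (𝔽 : Type*) [Field 𝔽] (n k : ℕ) (Sk X : Finset (Finset (Fin n))) : Prop :=
  X ⊆ Sk ∧ ∀ F ∈ Sk,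
    bvec 𝔽 n k F ∈ Submodule.span 𝔽 ((fun G => bvec 𝔽 n k G) '' (X : Set (Finset (Fin n)))) →
      F ∈ X

/-- A hyperplane of `Sim_k^n(S_k)`: a flat of rank one less than the rank of the matroid. -/
def SimHyperplane (𝔽 : Type*) [Field 𝔽] (n k : ℕ) (Sk H : Finset (Finset (Fin n))) : Prop :=
  SimFlat 𝔽 n k Sk H ∧ simRank 𝔽 n k H + 1 = simRank 𝔽 n k Sk

/-- A modular flat of `Sim_k^n(S_k)`:
`r(X) + r(Y) = r(X ∪ Y) + r(X ∩ Y)` for every flat `Y`. -/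
def ModularFlat (𝔽 : Type*) [Field 𝔽] (n k : ℕ) (Sk X : Finset (Finset (Fin n))) : Prop :=
  SimFlat 𝔽 n k Sk X ∧ ∀ Y, SimFlat 𝔽 n k Sk Y →
    simRank 𝔽 n k X + simRank 𝔽 n k Y = simRank 𝔽 n k (X ∪ Y) + simRank 𝔽 n k (X ∩ Y)

open scoped Classical in
/-- The closure of `X` in `Sim_k^n(S_k)`. -/
noncomputable def simClosure (𝔽 : Type*) [Field 𝔽] (n k : ℕ)
    (Sk X : Finset (Finset (Fin n))) : Finset (Finset (Fin n)) :=
  Sk.filter fun F =>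
    bvec 𝔽 n k F ∈ Submodule.span 𝔽 ((fun G => bvec 𝔽 n k G) '' (X : Set (Finset (Fin n))))

/-- `Sim_k^n(S_k)` is supersolvable: it admits a maximal chain of modular flats
`cl(∅) = X_0 ⊊ X_1 ⊊ ⋯ ⊊ X_r = S_k`, `r` the rank. -/
def Supersolvable (𝔽 : Type*) [Field 𝔽] (n k : ℕ) (Sk : Finset (Finset (Fin n))) : Prop :=
  ∃ X : ℕ → Finset (Finset (Fin n)),
    X 0 = simClosure 𝔽 n k Sk ∅ ∧ X (simRank 𝔽 n k Sk) = Sk ∧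
      (∀ i < simRank 𝔽 n k Sk, X i ⊂ X (i + 1)) ∧
      ∀ i ≤ simRank 𝔽 n k Sk, ModularFlat 𝔽 n k Sk (X i)

/-- `H` is a dense hyperplane of `Sim_k^n(ground)`: a hyperplane of the form
`ground ∖ supp(δ^{k-1} V)` for some `(k-1)`-subset `V` simplicial in `⟨ground⟩`. -/
def DenseHyp (𝔽 : Type*) [Field 𝔽] (n k : ℕ) (ground H : Finset (Finset (Fin n))) : Prop :=
  SimHyperplane 𝔽 n k ground H ∧
    ∃ V : Finset (Fin n), V.card = k - 1 ∧ SimplicialFace k ground V ∧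
      H = ground \ suppδ 𝔽 ground V

/-- `Sim_k^n(S_k)` is superdense: there is a chain `∅ = X_0 ⊊ X_1 ⊊ ⋯ ⊊ X_r = S_k` of flats
(`r` the rank) with each `X_i` a dense hyperplane of `Sim_k^n(X_{i+1})`. -/
def Superdense (𝔽 : Type*) [Field 𝔽] (n k : ℕ) (Sk : Finset (Finset (Fin n))) : Prop :=
  ∃ X : ℕ → Finset (Finset (Fin n)),
    X 0 = ∅ ∧ X (simRank 𝔽 n k Sk) = Sk ∧
      (∀ i ≤ simRank 𝔽 n k Sk, SimFlat 𝔽 n k Sk (X i)) ∧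
      (∀ i < simRank 𝔽 n k Sk, X i ⊂ X (i + 1)) ∧
      ∀ i < simRank 𝔽 n k Sk, DenseHyp 𝔽 n k (X (i + 1)) (X i)

/-- `Sim_k^n(S_k)` is triangulable over `𝔽`: the boundaries of the `(k+1)`-faces of `⟨S_k⟩`
span the circuit space `ker ∂_k`. -/
def Triangulable (𝔽 : Type*) [Field 𝔽] (n k : ℕ) (Sk : Finset (Finset (Fin n))) : Prop :=
  Submodule.span 𝔽
      {v : ↥Sk → 𝔽 | ∃ X : Finset (Fin n), X.card = k + 1 ∧ IsFace k Sk X ∧ v = pbdry 𝔽 Sk X}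
    = LinearMap.ker (bdryMap 𝔽 n k Sk)

/-- `Sim_k^n(S_k)` is strongly triangulable over `𝔽`: there are `(k+1)`-faces `X_1,…,X_{m'}`
of `⟨S_k⟩` whose boundaries span `ker ∂_k` and such that every circuit `C` has a
representing vector `C⃗` with support `C` which is a combination, with nonzero coefficients,
of boundaries `∂_{k+1} X_{i_j}` with `⋃_{F ∈ C} F = ⋃_j X_{i_j}`. -/
def StronglyTriangulable (𝔽 : Type*) [Field 𝔽] (n k : ℕ)
    (Sk : Finset (Finset (Fin n))) : Prop :=
  ∃ (m' : ℕ) (Xs : Fin m' → Finset (Fin n)),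
    (∀ i, (Xs i).card = k + 1 ∧ IsFace k Sk (Xs i)) ∧
    Submodule.span 𝔽 (Set.range fun i => pbdry 𝔽 Sk (Xs i)) = LinearMap.ker (bdryMap 𝔽 n k Sk) ∧
    ∀ C, SimCircuit 𝔽 n k Sk C →
      ∃ (s : ℕ) (idx : Fin s → Fin m') (a : Fin s → 𝔽) (Cv : ↥Sk → 𝔽),
        (∀ j, a j ≠ 0) ∧ suppFin Cv = C ∧
        Cv = ∑ j, a j • pbdry 𝔽 Sk (Xs (idx j)) ∧
        C.biUnion id = Finset.univ.biUnion fun j : Fin s => Xs (idx j)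

/-- The simple graph `([n], S_2)`. -/
def graphOf {n : ℕ} (S2 : Finset (Finset (Fin n))) : SimpleGraph (Fin n) where
  Adj u v := u ≠ v ∧ ({u, v} : Finset (Fin n)) ∈ S2
  symm := by
    constructor
    intro u v h
    exact ⟨h.1.symm, by rw [Finset.pair_comm]; exact h.2⟩
  loopless := by constructor; intro u h; exact h.1 rfl

/-- A simple graph is chordal if every cycle of length at least four has a chord, i.e. an
edge of the graph joining two non-consecutive vertices of the cycle. -/
def Chordal {α : Type*} (G : SimpleGraph α) : Prop :=
  ∀ (v : α) (w : G.Walk v v), w.IsCycle → 4 ≤ w.length →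
    ∃ u₁ u₂, u₁ ∈ w.support ∧ u₂ ∈ w.support ∧ G.Adj u₁ u₂ ∧ s(u₁, u₂) ∉ w.edges

/-!
The members of `supp(δ^{k-1} V)` are exactly the sets `V ∪ {x}` lying in `S_k`, since `[V : F]`
is a sign when `V = F ∖ {x}` and `0` otherwise. Each of them is a face, so lies in a facet
strictly containing `V`; if `X` is the only such facet, they all lie in `X`. Conversely every
`x ∈ X ∖ V` gives a `k`-subset `V ∪ {x}` of the face `X`, hence a member of `S_k`, and these sets
cover `X`.
-/

theorem Finset.biUnion_sdiff_insert_of_ssubset {α : Type*} [DecidableEq α] {s t : Finset α}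
    (h : s ⊂ t) : (t \ s).biUnion (insert · s) = t := by
  ext x
  simp only [mem_biUnion, mem_sdiff, mem_insert]
  constructor
  · rintro ⟨y, ⟨hyt, -⟩, rfl | hxs⟩
    exacts [hyt, h.1 hxs]
  · intro hxt
    by_cases hxs : x ∈ s
    · obtain ⟨y, hyt, hys⟩ := exists_of_ssubset h
      exact ⟨y, ⟨hyt, hys⟩, Or.inr hxs⟩
    · exact ⟨x, ⟨hxt, hxs⟩, Or.inl rfl⟩

section Incidence

variable {n : ℕ}

theorem inc_erase {F : Finset (Fin n)} {i : Fin n} (hi : i ∈ F) :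
    inc (F.erase i) F = (-1) ^ #(F.filter (· ≤ i)) := by
  unfold inc
  rw [sum_eq_single i (fun j _ hji => if_neg ((erase_inj F hi).not.2 hji.symm)) (absurd hi),
    if_pos rfl]

theorem cast_inc_ne_zero_iff {R : Type*} [Ring R] [Nontrivial R] {F' F : Finset (Fin n)} :
    ((inc F' F : ℤ) : R) ≠ 0 ↔ ∃ i ∈ F, F.erase i = F' := by
  constructor
  · intro h
    by_contra! hne
    refine h ?_
    rw [inc, sum_eq_zero fun i hi => if_neg (hne i hi).symm, Int.cast_zero]
  · rintro ⟨i, hi, rfl⟩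
    rw [inc_erase hi]
    push_cast
    exact (isUnit_neg_one.pow _).ne_zero

theorem mem_suppδ (𝔽 : Type*) [Field 𝔽] {Sk : Finset (Finset (Fin n))} {V F : Finset (Fin n)} :
    F ∈ suppδ 𝔽 Sk V ↔ F ∈ Sk ∧ ∃ i ∈ F, F.erase i = V := by
  simp only [suppδ, suppFin, cobdry, mem_image, mem_filter, mem_attach, true_and,
    Subtype.exists, exists_and_right, exists_eq_right, exists_prop, cast_inc_ne_zero_iff]

end Incidence

section Faces

variable {n k : ℕ} {Sk : Finset (Finset (Fin n))}

theorem isFace_of_mem {F : Finset (Fin n)} (hF : F ∈ Sk) (hFk : #F = k) : IsFace k Sk F :=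
  Or.inr fun _ hGF hGk => eq_of_subset_of_card_le hGF (hFk.trans hGk.symm).le ▸ hF

theorem IsFace.mem_of_subset {X G : Finset (Fin n)} (hX : IsFace k Sk X) (hGX : G ⊆ X)
    (hGk : #G = k) : G ∈ Sk :=
  hX.resolve_left (fun hlt => (card_le_card hGX).not_gt (hGk ▸ hlt)) G hGX hGk

theorem IsFace.exists_isFacet_superset {F : Finset (Fin n)} (hF : IsFace k Sk F) :
    ∃ X, IsFacet k Sk X ∧ F ⊆ X := by
  classical
  let T := univ.filter fun G => IsFace k Sk G ∧ F ⊆ G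
  obtain ⟨X, hXT, hmax⟩ := T.exists_max_image card ⟨F, by simp [T, hF]⟩
  obtain ⟨hX, hFX⟩ := (mem_filter.1 hXT).2
  refine ⟨X, ⟨hX, fun G hG hXG => ?_⟩, hFX⟩
  exact eq_of_subset_of_card_le hXG (hmax G (by simp [T, hG, hFX.trans hXG]))

end Faces

section Coboundary

variable (𝔽 : Type*) [Field 𝔽] {n k : ℕ} {Sk : Finset (Finset (Fin n))} {V X : Finset (Fin n)}

theorem subset_biUnion_suppδ (hV : #V + 1 = k) (hX : IsFace k Sk X) (hVX : V ⊂ X) :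
    X ⊆ (suppδ 𝔽 Sk V).biUnion id := by
  classical
  intro x hx
  rw [← biUnion_sdiff_insert_of_ssubset hVX, mem_biUnion] at hx
  obtain ⟨y, hy, hxy⟩ := hx
  obtain ⟨hyX, hyV⟩ := mem_sdiff.1 hy
  have hmem : insert y V ∈ Sk :=
    hX.mem_of_subset (insert_subset hyX hVX.1) (by rw [card_insert_of_notMem hyV, hV])
  exact mem_biUnion.2
    ⟨insert y V, (mem_suppδ 𝔽).2 ⟨hmem, y, mem_insert_self y V, erase_insert hyV⟩, hxy⟩

theorem biUnion_suppδ_subset (hSk : ∀ F ∈ Sk, #F = k)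
    (huniq : ∀ Y, IsFacet k Sk Y → V ⊂ Y → Y = X) :
    (suppδ 𝔽 Sk V).biUnion id ⊆ X := by
  refine biUnion_subset.2 fun F hF => ?_
  obtain ⟨hFS, i, hi, rfl⟩ := (mem_suppδ 𝔽).1 hF
  obtain ⟨Y, hY, hFY⟩ := (isFace_of_mem hFS (hSk F hFS)).exists_isFacet_superset
  exact huniq Y hY ((erase_ssubset hi).trans_le hFY) ▸ hFY

end Coboundary

theorem stmt7_general (𝔽 : Type*) [Field 𝔽] (n k : ℕ) (hk : 2 ≤ k)
    (Sk : Finset (Finset (Fin n))) (hSk : ∀ F ∈ Sk, F.card = k)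
    (V : Finset (Fin n)) (hV : V.card = k - 1) :
    SimplicialFace k Sk V ↔
      (IsFacet k Sk ((suppδ 𝔽 Sk V).biUnion id) ∧ V ⊂ (suppδ 𝔽 Sk V).biUnion id ∧
        ∀ Y, IsFacet k Sk Y → V ⊂ Y → Y = (suppδ 𝔽 Sk V).biUnion id) := by
  constructor
  · rintro ⟨X, ⟨hX, hVX⟩, huniq⟩
    have huniq' : ∀ Y, IsFacet k Sk Y → V ⊂ Y → Y = X := fun Y hY hVY => huniq Y ⟨hY, hVY⟩
    have hunion : (suppδ 𝔽 Sk V).biUnion id = X :=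
      (biUnion_suppδ_subset 𝔽 hSk huniq').antisymm
        (subset_biUnion_suppδ 𝔽 (by omega) hX.1 hVX)
    rw [hunion]
    exact ⟨hX, hVX, huniq'⟩
  · rintro ⟨hX, hVX, huniq⟩
    exact ⟨_, ⟨hX, hVX⟩, fun Y hY => huniq Y hY.1 hY.2⟩

theorem stmt7 (𝔽 : Type*) [Field 𝔽] (n k : ℕ) (hk : 2 ≤ k) (hkn : k ≤ n)
    (Sk : Finset (Finset (Fin n))) (hSk : ∀ F ∈ Sk, F.card = k)
    (V : Finset (Fin n)) (hV : V.card = k - 1) (hnf : ¬ IsFacet k Sk V) :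
    SimplicialFace k Sk V ↔
      (IsFacet k Sk ((suppδ 𝔽 Sk V).biUnion id) ∧ V ⊂ (suppδ 𝔽 Sk V).biUnion id ∧
        ∀ Y, IsFacet k Sk Y → V ⊂ Y → Y = (suppδ 𝔽 Sk V).biUnion id) :=
  stmt7_general 𝔽 n k hk Sk hSk V hV
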